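/- arXiv:0804.2819 — 5 statements merged into one kernel-verified Lean document; each statement's English description precedes it below -/
import Mathlib

section
/- In the bipolar extension L̃ of a finite lattice L, the join-irreducible elements are exactly the pairs (j,⊥) and (⊥,j) for j a join-irreducible element of L. -/
/-!
The embeddings `j ↦ (j, ⊥)` and `j ↦ (⊥, j)` of `L` into `L̃` have lower sets as ranges, so
they preserve and reflect the lower covers of an element, hence join-irreducibility. Conversely,
if `a = (x, y)` has a unique lower cover `b`, then by finiteness every element strictly below `a`
lies below `b`; if `x ≠ ⊥ ≠ y`, this applies to `(x, ⊥)` and `(⊥, y)`, forcing `a ≤ b`.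
-/

/-- In a finite lattice, "join-irreducible" can be characterized as
"covers exactly one element"; we use this characterization uniformly. -/
def CoversUniqueElem {α : Type*} [PartialOrder α] (a : α) : Prop :=
  ∃! b : α, b ⋖ a

theorem OrderEmbedding.coversUniqueElem_apply_iff {α β : Type*} [PartialOrder α]
    [PartialOrder β] (f : α ↪o β) (hf : IsLowerSet (Set.range f)) {a : α} :
    CoversUniqueElem (f a) ↔ CoversUniqueElem a := by
  have hcov : ∀ {c}, f c ⋖ f a ↔ c ⋖ a := hf.ordConnected.apply_covBy_apply_iff f
  constructor
  · rintro ⟨b, hb, hunique⟩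
    obtain ⟨c, rfl⟩ := hf hb.le (Set.mem_range_self a)
    exact ⟨c, hcov.1 hb, fun d hd => f.injective (hunique _ (hcov.2 hd))⟩
  · rintro ⟨c, hc, hunique⟩
    refine ⟨f c, hcov.2 hc, fun b hb => ?_⟩
    obtain ⟨d, rfl⟩ := hf hb.le (Set.mem_range_self a)
    rw [hunique d (hcov.1 hb)]

theorem le_of_lt_of_covBy_unique {α : Type*} [PartialOrder α] [IsStronglyCoatomic α]
    {a b x : α} (hunique : ∀ c, c ⋖ a → c = b) (hx : x < a) : x ≤ b := by
  obtain ⟨c, hxc, hca⟩ := exists_le_covBy_of_lt hx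
  exact hunique c hca ▸ hxc

abbrev BipolarExt (L : Type*) [SemilatticeInf L] [OrderBot L] :=
  {p : L × L // p.1 ⊓ p.2 = ⊥}

namespace BipolarExt

variable {L : Type*} [SemilatticeInf L] [OrderBot L]

def inl : L ↪o BipolarExt L :=
  OrderEmbedding.ofMapLEIff (fun j => ⟨(j, ⊥), inf_bot_eq j⟩) fun _ _ => by
    simp [← Subtype.coe_le_coe]

def inr : L ↪o BipolarExt L :=
  OrderEmbedding.ofMapLEIff (fun j => ⟨(⊥, j), bot_inf_eq j⟩) fun _ _ => by
    simp [← Subtype.coe_le_coe]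

theorem isLowerSet_range_inl : IsLowerSet (Set.range (inl : L → BipolarExt L)) := by
  rintro _ p hp ⟨j, rfl⟩
  exact ⟨p.val.1, Subtype.ext (Prod.ext rfl (le_bot_iff.1 hp.2).symm)⟩

theorem isLowerSet_range_inr : IsLowerSet (Set.range (inr : L → BipolarExt L)) := by
  rintro _ p hp ⟨j, rfl⟩
  exact ⟨p.val.2, Subtype.ext (Prod.ext (le_bot_iff.1 hp.1).symm rfl)⟩

theorem coversUniqueElem_inl_iff {j : L} : CoversUniqueElem (inl j) ↔ CoversUniqueElem j :=
  inl.coversUniqueElem_apply_iff isLowerSet_range_inl (a := j)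

theorem coversUniqueElem_inr_iff {j : L} : CoversUniqueElem (inr j) ↔ CoversUniqueElem j :=
  inr.coversUniqueElem_apply_iff isLowerSet_range_inr (a := j)

theorem mem_range_inl_or_mem_range_inr_of_coversUniqueElem [Finite L] {a : BipolarExt L}
    (ha : CoversUniqueElem a) : a ∈ Set.range inl ∨ a ∈ Set.range inr := by
  obtain ⟨b, hb, hunique⟩ := ha
  by_contra! hne
  have hl : inl a.val.1 < a := lt_of_le_of_ne ⟨le_rfl, bot_le⟩ fun h => hne.1 ⟨_, h⟩
  have hr : inr a.val.2 < a := lt_of_le_of_ne ⟨bot_le, le_rfl⟩ fun h => hne.2 ⟨_, h⟩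
  have hlb := le_of_lt_of_covBy_unique hunique hl
  have hrb := le_of_lt_of_covBy_unique hunique hr
  exact hb.lt.not_ge ⟨hlb.1, hrb.2⟩

end BipolarExt

open BipolarExt in
/-- The join-irreducible elements of the bipolar extension `L̃` of a finite lattice `L`
are exactly the pairs `(j, ⊥)` and `(⊥, j)` for `j` join-irreducible in `L`. -/
theorem bipolar_ext_joinIrreducible_iff
    (L : Type*) [Lattice L] [OrderBot L] [Fintype L]
    (a : {p : L × L // p.1 ⊓ p.2 = ⊥}) :
    CoversUniqueElem a ↔
      ∃ j : L, CoversUniqueElem j ∧ (a.val = (j, ⊥) ∨ a.val = (⊥, j)) := by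
  constructor
  · intro ha
    rcases mem_range_inl_or_mem_range_inr_of_coversUniqueElem ha with ⟨j, rfl⟩ | ⟨j, rfl⟩
    · exact ⟨j, coversUniqueElem_inl_iff.1 ha, Or.inl rfl⟩
    · exact ⟨j, coversUniqueElem_inr_iff.1 ha, Or.inr rfl⟩
  · rintro ⟨j, hj, ha | ha⟩
    · obtain rfl : a = inl j := Subtype.ext ha
      exact coversUniqueElem_inl_iff.2 hj
    · obtain rfl : a = inr j := Subtype.ext ha
      exact coversUniqueElem_inr_iff.2 hj
end

section
/- In a finite distributive lattice L, let η(x) denote the set of join-irreducible elements below x and J(L) the poset of join-irreducible elements; if x is complemented then both η(x) and its complement J(L)∖η(x) are downsets of J(L). -/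
/-- In a finite distributive lattice, if `x` is complemented (with complement `x'`),
then both `η(x) = {j join-irreducible : j ≤ x}` and its complement
`J(L) ∖ η(x)` are downsets of the poset `J(L)` of join-irreducible elements. -/
theorem eta_of_complemented_isLowerSet
    (L : Type*) [DistribLattice L] [BoundedOrder L] [Fintype L]
    (x x' : L) (h1 : x ⊓ x' = ⊥) (h2 : x ⊔ x' = ⊤) :
    IsLowerSet {j : {j : L // SupIrred j} | (j : L) ≤ x} ∧
    IsLowerSet {j : {j : L // SupIrred j} | ¬ (j : L) ≤ x} := by
  constructor
  · intro k j hjk hk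
    exact le_trans hjk hk
  · intro k j hjk hk hj
    -- k is sup-irreducible: k = (k ⊓ x) ⊔ (k ⊓ x')
    have hksplit : (↑k ⊓ x) ⊔ (↑k ⊓ x') = (k : L) := by
      rw [← inf_sup_left, h2, inf_top_eq]
    rcases k.2.2 hksplit with h | h
    · exact hk ((le_of_eq h.symm).trans inf_le_right)
    · -- k ≤ x', so j ≤ x', and j ≤ x, so j = ⊥, contradicting SupIrred
      have hjx' : (j : L) ≤ x' := le_trans hjk ((le_of_eq h.symm).trans inf_le_right)
      have hbot : (j : L) = ⊥ := le_bot_iff.mp (h1 ▸ le_inf hj hjx')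
      exact j.2.1 (by simp [hbot, IsMin])
end

section
/- Let L be a finite distributive lattice such that every connected component of the poset of join-irreducible elements J(L) has a unique minimal element. Then the bipolar extension L̃ equals the union over complemented elements x ∈ L of the intervals L(x) = [(⊥,⊥),(x,x')], where x' is the complement of x. -/
/-- If every connected component of the poset of join-irreducible elements of a
finite distributive lattice `L` has a unique minimal element, then the bipolar
extension `L̃` is the union of the intervals `L(x) = [(⊥,⊥),(x,x')]` over
complemented elements `x`: every `(y,z)` with `y ⊓ z = ⊥` satisfies `y ≤ x` and
`z ≤ x'` for some complemented `x` with complement `x'`. -/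
theorem bipolar_ext_eq_union_of_intervals
    (L : Type*) [DistribLattice L] [BoundedOrder L] [Fintype L]
    (huniq : ∀ a b : {j : L // SupIrred j}, IsMin a → IsMin b →
      Relation.ReflTransGen
        (fun u v : {j : L // SupIrred j} => u ≤ v ∨ v ≤ u) a b → a = b) :
    ∀ y z : L, y ⊓ z = ⊥ →
      ∃ x x' : L, x ⊓ x' = ⊥ ∧ x ⊔ x' = ⊤ ∧ y ≤ x ∧ z ≤ x' := by
  classical
  intro y z hyz
  set Sub := {j : L // SupIrred j} with hSub
  set R : Sub → Sub → Prop := fun u v => u ≤ v ∨ v ≤ u with hR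
  -- every non-bot element has a sup-irreducible element below it
  have hirr : ∀ b : L, b ≠ ⊥ → ∃ j : L, SupIrred j ∧ j ≤ b := by
    intro b hb
    obtain ⟨s, hs, hmem⟩ := exists_supIrred_decomposition b
    rcases s.eq_empty_or_nonempty with rfl | ⟨j, hj⟩
    · simp only [Finset.sup_empty] at hs
      exact absurd hs.symm hb
    · exact ⟨j, hmem hj, hs ▸ Finset.le_sup (f := id) hj⟩
  -- every sup-irreducible element has a minimal sup-irreducible element below it
  have hmin : ∀ u : Sub, ∃ m : Sub, IsMin m ∧ m ≤ u := by
    intro u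
    obtain ⟨m, hm, hmm⟩ :=
      (Finite.to_wellFoundedLT (α := Sub)).wf.has_min {v | v ≤ u} ⟨u, le_refl u⟩
    refine ⟨m, ?_, hm⟩
    intro v hv
    rcases eq_or_lt_of_le hv with rfl | hlt
    · exact le_rfl
    · exact absurd hlt (hmm v (le_trans hv hm))
  -- if two sup-irreducibles have non-bot meet, they are connected
  have hconn : ∀ (j k : Sub), (j : L) ⊓ (k : L) ≠ ⊥ → Relation.ReflTransGen R j k := by
    intro j k h
    obtain ⟨m, hm, hmle⟩ := hirr _ h
    have h1 : (⟨m, hm⟩ : Sub) ≤ j := Subtype.coe_le_coe.mp (le_trans hmle inf_le_left)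
    have h2 : (⟨m, hm⟩ : Sub) ≤ k := Subtype.coe_le_coe.mp (le_trans hmle inf_le_right)
    exact Relation.ReflTransGen.head (show R j ⟨m, hm⟩ from Or.inr h1)
      (Relation.ReflTransGen.single (show R ⟨m, hm⟩ k from Or.inl h2))
  -- the key predicate: j is connected to some sup-irreducible below z
  set P : Sub → Prop := fun j => ∃ k : Sub, (k : L) ≤ z ∧ Relation.ReflTransGen R j k with hP
  -- key: a sup-irreducible below y never satisfies P
  have key : ∀ j : Sub, (j : L) ≤ y → ¬ P j := by
    rintro j hj ⟨k, hk, hpath⟩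
    obtain ⟨m1, hm1, hm1le⟩ := hmin j
    obtain ⟨m2, hm2, hm2le⟩ := hmin k
    have hpath' : Relation.ReflTransGen R m1 m2 :=
      (Relation.ReflTransGen.single (show R m1 j from Or.inl hm1le)).trans
        (hpath.trans (Relation.ReflTransGen.single (show R k m2 from Or.inr hm2le)))
    have heq : m1 = m2 := huniq m1 m2 hm1 hm2 hpath'
    have hy : (m1 : L) ≤ y := le_trans hm1le hj
    have hz : (m1 : L) ≤ z := heq ▸ (le_trans hm2le hk)
    have : (m1 : L) ≤ ⊥ := hyz ▸ le_inf hy hz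
    exact m1.2.ne_bot (le_bot_iff.mp this)
  set s : Finset L := Finset.univ.filter (fun a => ∃ h : SupIrred a, ¬ P ⟨a, h⟩) with hs
  set t : Finset L := Finset.univ.filter (fun a => ∃ h : SupIrred a, P ⟨a, h⟩) with ht
  refine ⟨s.sup id, t.sup id, ?_, ?_, ?_, ?_⟩
  · -- disjointness
    rw [← le_bot_iff, Finset.sup_inf_distrib_right]
    refine Finset.sup_le fun a ha => ?_
    rw [Finset.sup_inf_distrib_left]
    refine Finset.sup_le fun b hb => ?_
    obtain ⟨hairr, hanp⟩ := (Finset.mem_filter.mp ha).2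
    obtain ⟨hbirr, hbp⟩ := (Finset.mem_filter.mp hb).2
    by_contra hne
    rw [le_bot_iff] at hne
    have hpath := hconn ⟨a, hairr⟩ ⟨b, hbirr⟩ hne
    obtain ⟨k, hk, hpath2⟩ := hbp
    exact hanp ⟨k, hk, hpath.trans hpath2⟩
  · -- join is top
    refine le_antisymm le_top ?_
    obtain ⟨u, hu, humem⟩ := exists_supIrred_decomposition (⊤ : L)
    rw [← hu]
    refine Finset.sup_le fun a ha => ?_
    have hirr' := humem ha
    by_cases hp : P ⟨a, hirr'⟩
    · exact le_trans (Finset.le_sup (f := id)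
        (Finset.mem_filter.mpr ⟨Finset.mem_univ a, hirr', hp⟩)) le_sup_right
    · exact le_trans (Finset.le_sup (f := id)
        (Finset.mem_filter.mpr ⟨Finset.mem_univ a, hirr', hp⟩)) le_sup_left
  · -- y ≤ x
    obtain ⟨u, hu, humem⟩ := exists_supIrred_decomposition y
    rw [← hu]
    refine Finset.sup_le fun a ha => ?_
    have hirr' := humem ha
    have hay : a ≤ y := hu ▸ Finset.le_sup (f := id) ha
    exact Finset.le_sup (f := id)
      (Finset.mem_filter.mpr ⟨Finset.mem_univ a, hirr', key ⟨a, hirr'⟩ hay⟩)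
  · -- z ≤ x'
    obtain ⟨u, hu, humem⟩ := exists_supIrred_decomposition z
    rw [← hu]
    refine Finset.sup_le fun a ha => ?_
    have hirr' := humem ha
    have haz : a ≤ z := hu ▸ Finset.le_sup (f := id) ha
    exact Finset.le_sup (f := id)
      (Finset.mem_filter.mpr ⟨Finset.mem_univ a, hirr',
        ⟨⟨a, hirr'⟩, haz, Relation.ReflTransGen.refl⟩⟩)
end

section
/- Let L be a finite distributive lattice. If some connected component of J(L) has two distinct minimal elements j and j', then the element (j, j') of L̃ lies in no interval L(x) for complemented x; hence L̃ strictly contains ⋃_{x ∈ c(L)} L(x). -/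
/-- If some connected component of the poset of join-irreducibles of a finite
distributive lattice `L` has two distinct minimal elements `j ≠ j'`, then
`(j, j')` belongs to `L̃` (i.e. `j ⊓ j' = ⊥`) but lies in no interval
`L(x) = [(⊥,⊥),(x,x')]` with `x` complemented; hence `L̃` strictly contains
`⋃_{x ∈ c(L)} L(x)`. -/
theorem bipolar_ext_not_union_of_intervals
    (L : Type*) [DistribLattice L] [BoundedOrder L] [Fintype L]
    (j j' : L) (hj : SupIrred j) (hj' : SupIrred j') (hne : j ≠ j')
    (hmin : IsMin (⟨j, hj⟩ : {k : L // SupIrred k}))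
    (hmin' : IsMin (⟨j', hj'⟩ : {k : L // SupIrred k}))
    (hreach : Relation.ReflTransGen
      (fun u v : {k : L // SupIrred k} => u ≤ v ∨ v ≤ u) ⟨j, hj⟩ ⟨j', hj'⟩) :
    j ⊓ j' = ⊥ ∧
    ∀ x x' : L, x ⊓ x' = ⊥ → x ⊔ x' = ⊤ → ¬ (j ≤ x ∧ j' ≤ x') := by
  constructor
  · by_contra hbot
    obtain ⟨s, hsup, hs⟩ := exists_supIrred_decomposition (j ⊓ j')
    have hne' : s.Nonempty := by
      rcases s.eq_empty_or_nonempty with rfl | h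
      · simp at hsup; exact (hbot hsup.symm).elim
      · exact h
    obtain ⟨k, hk⟩ := hne'
    have hkirr := hs hk
    have hkle : k ≤ j ⊓ j' := hsup ▸ Finset.le_sup (f := id) hk
    have h1 : (⟨k, hkirr⟩ : {k : L // SupIrred k}) ≤ ⟨j, hj⟩ :=
      Subtype.mk_le_mk.2 (le_trans hkle inf_le_left)
    have h2 : (⟨k, hkirr⟩ : {k : L // SupIrred k}) ≤ ⟨j', hj'⟩ :=
      Subtype.mk_le_mk.2 (le_trans hkle inf_le_right)
    have e1 : k = j := le_antisymm h1 (hmin h1)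
    have e2 : k = j' := le_antisymm h2 (hmin' h2)
    exact hne (e1 ▸ e2)
  · rintro x x' hinf hsup ⟨hjx, hj'x'⟩
    -- every sup-irreducible is ≤ x or ≤ x', exclusively
    have key : ∀ k : {k : L // SupIrred k}, (k.1 ≤ x ∧ ¬ k.1 ≤ x') ∨ (k.1 ≤ x' ∧ ¬ k.1 ≤ x) := by
      intro k
      have hkp : SupPrime k.1 := k.2.supPrime
      have hk : k.1 ≤ x ⊔ x' := hsup ▸ le_top
      have hnot : ¬ (k.1 ≤ x ∧ k.1 ≤ x') := by
        rintro ⟨h1, h2⟩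
        exact k.2.ne_bot (le_bot_iff.1 (hinf ▸ le_inf h1 h2))
      rcases hkp.2 hk with h | h
      · exact Or.inl ⟨h, fun h' => hnot ⟨h, h'⟩⟩
      · exact Or.inr ⟨h, fun h' => hnot ⟨h', h⟩⟩
    -- the side is invariant along the reachability relation
    have inv : ∀ u v : {k : L // SupIrred k},
        Relation.ReflTransGen (fun u v => u ≤ v ∨ v ≤ u) u v → u.1 ≤ x → v.1 ≤ x := by
      intro u v h
      induction h with
      | refl => exact id
      | tail _ hstep ih =>
        rename_i b c _
        intro hu
        have hb := ih hu
        rcases key c with ⟨h1, _⟩ | ⟨_, h2⟩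
        · exact h1
        · exfalso
          rcases hstep with h | h
          · rcases key c with ⟨h1, _⟩ | ⟨h1, h2'⟩
            · exact h2 h1
            · rcases key b with ⟨hb1, hb2⟩ | ⟨hb1, hb2⟩
              · exact hb2 (le_trans h h1)
              · exact hb2 hb
          · exact h2 (le_trans h hb)
    have hj'x : j' ≤ x := inv _ _ hreach hjx
    exact hj'.ne_bot (le_bot_iff.1 (hinf ▸ le_inf hj'x hj'x'))
end

section
/- Let ν be a game on a finite set N (ν(∅)=0) with Möbius transform m(A) = ∑_{B⊆A} (−1)^{|A∖B|} ν(B), and let f : N → ℝ₊. Then the Choquet integral of f with respect to ν equals ∑_{A ⊆ N, A ≠ ∅} m(A) · min_{i∈A} f(i). -/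
/-!
Writing `ν(A) = ∑_{B ⊆ A} m(B)` and exchanging the two sums, the coefficient of `m(B)` in the
Choquet sum is the sum of the increments `f(π i) - f(π (i+1))` over the levels `i` whose set
`{π 0, …, π i}` contains `B`. These are exactly the `i ≥ k`, where `π k` is the element of `B`
ranked last by `π`, so the increments telescope to `f(π k) = min_B f`. The empty set contributes
`m(∅) = ν(∅) = 0`.
-/

open Finset

theorem sum_Icc_neg_one_pow_card_sub {α R : Type*} [DecidableEq α] [CommRing R]
    {C A : Finset α} (hCA : C ⊆ A) :
    ∑ B ∈ Icc C A, (-1 : R) ^ (#B - #C) = if C = A then 1 else 0 := by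
  have hinj : Set.InjOn (C ∪ ·) (A \ C).powerset := fun D hD E hE hDE => by
    simp only [coe_powerset, Set.mem_preimage, Set.mem_powerset_iff, coe_subset,
      subset_sdiff] at hD hE
    simpa [union_sdiff_cancel_left hD.2.symm, union_sdiff_cancel_left hE.2.symm] using
      congr_arg (· \ C) hDE
  rw [Icc_eq_image_powerset hCA, sum_image hinj]
  have hcard : ∀ D ∈ (A \ C).powerset, #(C ∪ D) - #C = #D := fun D hD => by
    rw [card_union_of_disjoint (disjoint_of_subset_right (mem_powerset.1 hD) disjoint_sdiff)]
    omega
  rw [sum_congr rfl fun D hD => by rw [hcard D hD]]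
  have := congr_arg (Int.cast : ℤ → R) (sum_powerset_neg_one_pow_card (x := A \ C))
  push_cast at this
  simp only [this, sdiff_eq_empty_iff_subset]
  exact if_congr ⟨fun h => hCA.antisymm h, fun h => h ▸ subset_rfl⟩ rfl rfl

theorem moebius_inversion_powerset {α R : Type*} [DecidableEq α] [CommRing R]
    {ν m : Finset α → R} (hm : ∀ A, m A = ∑ B ∈ A.powerset, (-1 : R) ^ (#A - #B) * ν B)
    (A : Finset α) : ν A = ∑ B ∈ A.powerset, m B := by
  simp_rw [hm]
  rw [sum_comm' (t' := A.powerset) (s' := fun C => Icc C A) (by grind)]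
  rw [sum_congr rfl fun C hC => by rw [← sum_mul, sum_Icc_neg_one_pow_card_sub (mem_powerset.1 hC)]]
  simp [ite_mul]

theorem sum_mul_sum_powerset {ι α R : Type*} [Fintype α] [DecidableEq α] [CommSemiring R]
    (s : Finset ι) (c : ι → R) (S : ι → Finset α) (m : Finset α → R) :
    ∑ i ∈ s, c i * ∑ B ∈ (S i).powerset, m B = ∑ B, m B * ∑ i ∈ s with B ⊆ S i, c i := by
  simp_rw [sum_filter, mul_sum, mul_ite, mul_zero]
  rw [sum_comm]
  refine sum_congr rfl fun i _ => ?_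
  rw [← sum_filter, filter_subset_univ]
  exact sum_congr rfl fun _ _ => mul_comm _ _

theorem Fin.sum_ite_le_sub_succ {M : Type*} [AddCommGroup M] {n : ℕ} (g : Fin n → M) (k : Fin n) :
    ∑ i : Fin n, (if k ≤ i then g i - (if h : (i : ℕ) + 1 < n then g ⟨i + 1, h⟩ else 0) else 0)
      = g k := by
  set G : ℕ → M := fun j => if h : j < n then g ⟨j, h⟩ else 0
  have hG : ∀ i : Fin n, g i - (if h : (i : ℕ) + 1 < n then g ⟨i + 1, h⟩ else 0)
      = G i - G (i + 1) := fun i => by simp [G]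
  simp_rw [hG, Fin.le_def]
  rw [Fin.sum_univ_eq_sum_range (fun j => if (k : ℕ) ≤ j then G j - G (j + 1) else 0),
    ← sum_filter, range_eq_Ico, Ico_filter_le, max_eq_right k.val.zero_le, ← neg_inj,
    ← sum_neg_distrib]
  simp_rw [neg_sub]
  rw [sum_Ico_sub G k.is_lt.le]
  simp [G]

theorem subset_image_filter_le_iff {ι β : Type*} [Fintype ι] [LinearOrder ι] [DecidableEq β]
    (π : ι ≃ β) (B : Finset β) (i : ι) :
    B ⊆ (univ.filter fun k : ι => k ≤ i).image π ↔ ∀ b ∈ B, π.symm b ≤ i := by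
  refine forall₂_congr fun b _ => ?_
  simp [← Equiv.eq_symm_apply]

theorem sInf_image_eq_apply_sup'_symm {ι β γ : Type*} [LinearOrder ι]
    [ConditionallyCompleteLinearOrder γ] {f : β → γ} {π : ι ≃ β} (hf : Antitone (f ∘ π))
    {B : Finset β} (hB : B.Nonempty) : sInf (f '' B) = f (π (B.sup' hB π.symm)) := by
  refine IsLeast.csInf_eq ⟨?_, ?_⟩
  · obtain ⟨b, hb, hbK⟩ := exists_mem_eq_sup' hB π.symm
    exact ⟨b, hb, by rw [hbK, Equiv.apply_symm_apply]⟩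
  · rintro _ ⟨b, hb, rfl⟩
    simpa using hf (le_sup' π.symm hb)

theorem choquet_eq_sum_mobius_min_general
    (n : ℕ) (f : Fin n → ℝ)
    (ν : Finset (Fin n) → ℝ) (hν0 : ν ∅ = 0)
    (m : Finset (Fin n) → ℝ)
    (hm : ∀ A : Finset (Fin n),
      m A = ∑ B ∈ A.powerset, (-1 : ℝ) ^ (A.card - B.card) * ν B)
    (π : Equiv.Perm (Fin n))
    (hπ : ∀ i j : Fin n, i ≤ j → f (π j) ≤ f (π i)) :
    ∑ i : Fin n,
        (f (π i) - (if h : (i : ℕ) + 1 < n then f (π ⟨(i : ℕ) + 1, h⟩) else 0)) *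
          ν ((Finset.univ.filter fun k : Fin n => k ≤ i).image π) =
      ∑ A ∈ Finset.univ.filter (fun A : Finset (Fin n) => A.Nonempty),
        m A * sInf (f '' ↑A) := by
  have hm0 : m ∅ = 0 := by simp [hm, hν0]
  simp_rw [moebius_inversion_powerset hm]
  rw [sum_mul_sum_powerset, ← sum_filter_of_ne (p := Finset.Nonempty) fun B _ hB =>
    nonempty_iff_ne_empty.2 (by rintro rfl; exact hB (by rw [hm0, zero_mul]))]
  refine sum_congr rfl fun B hBmem => ?_
  have hB : B.Nonempty := (mem_filter.1 hBmem).2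
  rw [sInf_image_eq_apply_sup'_symm (fun _ _ => hπ _ _) hB, sum_filter]
  simp_rw [subset_image_filter_le_iff, ← sup'_le_iff hB]
  exact congrArg (m B * ·) (Fin.sum_ite_le_sub_succ (f ∘ π) _)

/-- Choquet integral in terms of the Möbius transform: for a game `ν` (`ν ∅ = 0`)
with Möbius transform `m(A) = ∑_{B ⊆ A} (−1)^{|A∖B|} ν(B)` and nonnegative `f`,
`∫ f dν = ∑_{A ≠ ∅} m(A) · min_{i ∈ A} f(i)`. -/
theorem choquet_eq_sum_mobius_min
    (n : ℕ) (f : Fin n → ℝ) (hf : ∀ i, 0 ≤ f i)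
    (ν : Finset (Fin n) → ℝ) (hν0 : ν ∅ = 0)
    (m : Finset (Fin n) → ℝ)
    (hm : ∀ A : Finset (Fin n),
      m A = ∑ B ∈ A.powerset, (-1 : ℝ) ^ (A.card - B.card) * ν B)
    (π : Equiv.Perm (Fin n))
    (hπ : ∀ i j : Fin n, i ≤ j → f (π j) ≤ f (π i)) :
    ∑ i : Fin n,
        (f (π i) - (if h : (i : ℕ) + 1 < n then f (π ⟨(i : ℕ) + 1, h⟩) else 0)) *
          ν ((Finset.univ.filter fun k : Fin n => k ≤ i).image π) =
      ∑ A ∈ Finset.univ.filter (fun A : Finset (Fin n) => A.Nonempty),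
        m A * sInf (f '' ↑A) :=
  choquet_eq_sum_mobius_min_general n f ν hν0 m hm π hπ
end
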